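/- arXiv:2106.12261 — 5 statements merged into one kernel-verified Lean document; each statement's English description precedes it below -/
import Mathlib

section
/- Let K ⊆ ℝ^d be a set of diameter at most D (i.e. ‖u − v‖ ≤ D for all u, v ∈ K), let w_1,…,w_T ∈ K, and with weights α_t = t define x_t = (Σ_{i=1}^t i·w_i)/(t(t+1)/2). Then for every t with 1 ≤ t ≤ T and every integer τ with 0 ≤ τ ≤ t − 1, one has ‖x_t − x_{t−τ}‖ ≤ 8·τ·D/t. -/
/-!
The anytime average `x t` is the center of mass of `w 1, …, w t` with weights `1, …, t`.
If `s ≤ t` and `A n = n (n + 1) / 2` is the total weight up to `n`, then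
`A t • (x t - x s) = ∑_{s < i ≤ t} i • (w i - x s)`, and every `w i - x s` has norm at most `D`
because `x s` lies in the convex hull of points within `D` of `w i`. Hence
`‖x t - x s‖ ≤ (A t - A s) / A t * D`, and `(A t - A s) / A t ≤ 2 (t - s) / t`.
-/

open Finset

section CenterMass

variable {ι R E : Type*} [Field R] [AddCommGroup E] [Module R E] {a : ι → R} {z : ι → E}

lemma Finset.sum_smul_sub_eq_smul_centerMass_sub {u : Finset ι} (hu : ∑ i ∈ u, a i ≠ 0) (c : E) :
    ∑ i ∈ u, a i • (z i - c) = (∑ i ∈ u, a i) • (u.centerMass a z - c) := by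
  simp only [smul_sub, sum_sub_distrib, ← sum_smul, centerMass, smul_inv_smul₀ hu]

lemma Finset.sum_smul_sub_centerMass {u : Finset ι} (hu : ∑ i ∈ u, a i ≠ 0) :
    ∑ i ∈ u, a i • (z i - u.centerMass a z) = 0 := by
  rw [sum_smul_sub_eq_smul_centerMass_sub hu, sub_self, smul_zero]

end CenterMass

section NormedCenterMass

variable {ι E : Type*} [SeminormedAddCommGroup E] [NormedSpace ℝ E] {a : ι → ℝ} {z : ι → E}

lemma Finset.sum_mul_norm_centerMass_sub_centerMass_le [DecidableEq ι] {s t : Finset ι}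
    (hst : s ⊆ t) (ha : ∀ i ∈ t, 0 ≤ a i) (hs : 0 < ∑ i ∈ s, a i) {D : ℝ}
    (hz : ∀ i ∈ t, ∀ j ∈ t, ‖z i - z j‖ ≤ D) :
    (∑ i ∈ t, a i) * ‖t.centerMass a z - s.centerMass a z‖
      ≤ (∑ i ∈ t, a i - ∑ i ∈ s, a i) * D := by
  set c := s.centerMass a z
  have hts : ∑ i ∈ t, a i = ∑ i ∈ t \ s, a i + ∑ i ∈ s, a i := (sum_sdiff hst).symm
  have ht : 0 < ∑ i ∈ t, a i := by
    rw [hts]; exact add_pos_of_nonneg_of_pos (sum_nonneg fun i hi ↦ ha i (sdiff_subset hi)) hs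
  have hc : ∀ i ∈ t, ‖z i - c‖ ≤ D := fun i hi ↦ by
    rw [← dist_eq_norm, dist_comm, ← Metric.mem_closedBall]
    refine (convex_closedBall _ _).centerMass_mem (fun j hj ↦ ha j (hst hj)) hs fun j hj ↦ ?_
    rw [Metric.mem_closedBall, dist_eq_norm]
    exact hz j (hst hj) i hi
  have hsplit : (∑ i ∈ t, a i) • (t.centerMass a z - c) = ∑ i ∈ t \ s, a i • (z i - c) := by
    rw [← sum_smul_sub_eq_smul_centerMass_sub ht.ne', ← sum_sdiff hst,
      sum_smul_sub_centerMass hs.ne', add_zero]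
  calc (∑ i ∈ t, a i) * ‖t.centerMass a z - c‖
      = ‖∑ i ∈ t \ s, a i • (z i - c)‖ := by
        rw [← hsplit, norm_smul, Real.norm_of_nonneg ht.le]
    _ ≤ ∑ i ∈ t \ s, a i * D := by
        refine (norm_sum_le _ _).trans (sum_le_sum fun i hi ↦ ?_)
        have hi := mem_sdiff.1 hi
        rw [norm_smul, Real.norm_of_nonneg (ha i hi.1)]
        exact mul_le_mul_of_nonneg_left (hc i hi.1) (ha i hi.1)
    _ = (∑ i ∈ t, a i - ∑ i ∈ s, a i) * D := by rw [← sum_mul, hts, add_sub_cancel_right]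

end NormedCenterMass

lemma Finset.sum_Icc_one_natCast (n : ℕ) : ∑ i ∈ Icc 1 n, (i : ℝ) = n * (n + 1) / 2 := by
  induction n with
  | zero => simp
  | succ n ih =>
    rw [sum_Icc_succ_top (by omega), ih]
    push_cast
    ring

/-- If `K ⊆ ℝ^d` has diameter at most `D`, `w_1, …, w_T ∈ K`, and
`x t` are the anytime averages with weights `α t = t`, then for all `1 ≤ t ≤ T` and
`0 ≤ τ ≤ t - 1` we have `‖x t - x (t - τ)‖ ≤ 8 τ D / t`. -/
theorem stmt_5 {d T : ℕ} (K : Set (EuclideanSpace ℝ (Fin d))) (D : ℝ)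
    (hD : ∀ u ∈ K, ∀ v ∈ K, ‖u - v‖ ≤ D)
    (w x : ℕ → EuclideanSpace ℝ (Fin d))
    (hw : ∀ t ∈ Icc 1 T, w t ∈ K)
    (hx : ∀ t ∈ Icc 1 T, x t = ((t * (t + 1) : ℝ) / 2)⁻¹ • ∑ i ∈ Icc 1 t, (i : ℝ) • w i) :
    ∀ t ∈ Icc 1 T, ∀ τ : ℕ, τ ≤ t - 1 →
      ‖x t - x (t - τ)‖ ≤ 8 * τ * D / t := by
  intro t ht τ hτ
  obtain ⟨ht1, htT⟩ := mem_Icc.1 ht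
  have hx_centerMass : ∀ n ∈ Icc 1 T, x n = (Icc 1 n).centerMass (fun i : ℕ ↦ (i : ℝ)) w :=
    fun n hn ↦ by rw [hx n hn, centerMass, sum_Icc_one_natCast]
  have hD0 : 0 ≤ D := by simpa using hD _ (hw 1 (by simp; omega)) _ (hw 1 (by simp; omega))
  have hdiam : ∀ i ∈ Icc 1 t, ∀ j ∈ Icc 1 t, ‖w i - w j‖ ≤ D := fun i hi j hj ↦
    hD _ (hw i (Icc_subset_Icc_right htT hi)) _ (hw j (Icc_subset_Icc_right htT hj))
  have hpos : 0 < ∑ i ∈ Icc 1 (t - τ), (i : ℝ) :=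
    sum_pos (fun i hi ↦ Nat.cast_pos.2 (mem_Icc.1 hi).1) (nonempty_Icc.2 (by omega))
  have hbound := sum_mul_norm_centerMass_sub_centerMass_le (Icc_subset_Icc_right (by omega))
    (fun i _ ↦ Nat.cast_nonneg i) hpos hdiam
  rw [← hx_centerMass t ht, ← hx_centerMass (t - τ) (by simp; omega), sum_Icc_one_natCast,
    sum_Icc_one_natCast, Nat.cast_sub (by omega)] at hbound
  have hτt : (τ : ℝ) ≤ t := by exact_mod_cast (by omega : τ ≤ t)
  have hgap : (t : ℝ) * (t + 1) / 2 - (t - τ) * (t - τ + 1) / 2 ≤ τ * (t + 1) := by nlinarith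
  rw [le_div_iff₀ (by exact_mod_cast ht1)]
  nlinarith [norm_nonneg (x t - x (t - τ)), mul_nonneg (Nat.cast_nonneg (α := ℝ) τ) hD0]
end

section
/- Let K ⊆ ℝ^d be a nonempty convex set, let f : ℝ^d → ℝ be convex and differentiable, let w* ∈ K, let α_1,…,α_T be positive weights, let w_1,…,w_T ∈ K with anytime averages x_t = (Σ_{i=1}^t α_i w_i)/α_{1:t}, and let τ_1,…,τ_T be integers with 0 ≤ τ_t ≤ t − 1. Then Σ_{t=1}^T α_t·(f(x_t) − f(w*)) ≤ Σ_{t=1}^T α_{1:t−1}·⟨∇f(x_t), x_{t−1} − x_t⟩ + Σ_{t=1}^T α_t·⟨∇f(x_{t−τ_t}), w_t − w*⟩ + Σ_{t=1}^T α_t·‖∇f(x_t) − ∇f(x_{t−τ_t})‖·‖w_t − w*‖, where α_{1:0} = 0 (so the t = 1 summand of the first sum vanishes). -/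
/-!
Convexity gives `α_t (f(x_t) - f(w*)) ≤ α_t ⟪∇f(x_t), x_t - w*⟫`, and the definition of the
anytime averages, `α_{1:t} x_t = α_{1:t-1} x_{t-1} + α_t w_t`, splits `α_t (x_t - w*)` as
`α_{1:t-1} (x_{t-1} - x_t) + α_t (w_t - w*)`. Replacing `∇f(x_t)` by the stale gradient
`∇f(x_{t-τ_t})` in the second part costs at most the Cauchy–Schwarz error term.
-/

open Finset
open scoped RealInnerProductSpace

section FirstOrder

variable {E : Type*} [NormedAddCommGroup E] [NormedSpace ℝ E]

theorem ConvexOn.add_fderiv_sub_le {f : E → ℝ} {f' : E →L[ℝ] ℝ} {a : E}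
    (hf : ConvexOn ℝ Set.univ f) (hfa : HasFDerivAt f f' a) (b : E) :
    f a + f' (b - a) ≤ f b := by
  set g : ℝ → ℝ := fun s => f (AffineMap.lineMap a b s)
  have hg : ConvexOn ℝ Set.univ g :=
    (hf.comp_affineMap (AffineMap.lineMap a b)).subset (Set.subset_univ _) convex_univ
  have hline : HasDerivAt (fun s : ℝ => AffineMap.lineMap a b s) (b - a) 0 := by
    simpa [AffineMap.lineMap_apply_module'] using
      ((hasDerivAt_id (0 : ℝ)).smul_const (b - a)).add_const a
  have hg' : HasDerivAt g (f' (b - a)) 0 := by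
    refine HasFDerivAt.comp_hasDerivAt (0 : ℝ) ?_ hline
    simpa using hfa
  have := hg.le_slope_of_hasDerivAt (Set.mem_univ 0) (Set.mem_univ 1) one_pos hg'
  simp only [g, slope_def_field, AffineMap.lineMap_apply_zero, AffineMap.lineMap_apply_one,
    sub_zero, div_one] at this
  linarith

end FirstOrder

section Gradient

variable {F : Type*} [NormedAddCommGroup F] [InnerProductSpace ℝ F]

theorem real_inner_le_inner_add_norm_sub_mul_norm (g g' v : F) :
    ⟪g, v⟫ ≤ ⟪g', v⟫ + ‖g - g'‖ * ‖v‖ := by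
  have := real_inner_le_norm (g - g') v
  rw [inner_sub_left] at this
  linarith

variable [CompleteSpace F]

theorem ConvexOn.sub_le_inner_gradient {f : F → ℝ} {a : F}
    (hf : ConvexOn ℝ Set.univ f) (hfa : DifferentiableAt ℝ f a) (b : F) :
    f a - f b ≤ ⟪gradient f a, a - b⟫ := by
  have := hf.add_fderiv_sub_le hfa.hasFDerivAt b
  rw [← inner_gradient_left, ← neg_sub a b, inner_neg_right] at this
  linarith

theorem ConvexOn.mul_sub_le_of_smul_sub_eq {f : F → ℝ} {x y w u g' : F} {S a : ℝ}
    (hf : ConvexOn ℝ Set.univ f) (hfy : DifferentiableAt ℝ f y) (ha : 0 ≤ a)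
    (hstep : a • (y - u) = S • (x - y) + a • (w - u)) :
    a * (f y - f u) ≤
      S * ⟪gradient f y, x - y⟫ + a * ⟪g', w - u⟫ + a * (‖gradient f y - g'‖ * ‖w - u‖) := by
  have hsplit : a * ⟪gradient f y, y - u⟫ =
      S * ⟪gradient f y, x - y⟫ + a * ⟪gradient f y, w - u⟫ := by
    simpa only [inner_add_right, real_inner_smul_right] using
      congrArg (fun v => ⟪gradient f y, v⟫) hstep
  have hconv := mul_le_mul_of_nonneg_left (hf.sub_le_inner_gradient hfy u) ha
  have hstale := mul_le_mul_of_nonneg_left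
    (real_inner_le_inner_add_norm_sub_mul_norm (gradient f y) g' (w - u)) ha
  linarith

end Gradient

section AnytimeAverage

variable {E : Type*} [AddCommGroup E] [Module ℝ E]

theorem sum_Icc_smul_eq_of_anytime_average {T t : ℕ} {α : ℕ → ℝ} {w x : ℕ → E}
    (hα : ∀ t ∈ Icc 1 T, 0 < α t)
    (hx : ∀ t ∈ Icc 1 T, x t = (∑ i ∈ Icc 1 t, α i)⁻¹ • ∑ i ∈ Icc 1 t, α i • w i)
    (ht : t ≤ T) :
    (∑ i ∈ Icc 1 t, α i) • x t = ∑ i ∈ Icc 1 t, α i • w i := by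
  rcases Nat.eq_zero_or_pos t with rfl | ht0
  · simp
  have hpos : 0 < ∑ i ∈ Icc 1 t, α i :=
    sum_pos (fun i hi => hα i (by grind)) (nonempty_Icc.2 ht0)
  rw [hx t (mem_Icc.2 ⟨ht0, ht⟩), smul_smul, mul_inv_cancel₀ hpos.ne', one_smul]

theorem smul_sub_eq_of_anytime_average {T t : ℕ} {α : ℕ → ℝ} {w x : ℕ → E} (u : E)
    (hα : ∀ t ∈ Icc 1 T, 0 < α t)
    (hx : ∀ t ∈ Icc 1 T, x t = (∑ i ∈ Icc 1 t, α i)⁻¹ • ∑ i ∈ Icc 1 t, α i • w i)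
    (ht : t ∈ Icc 1 T) :
    α t • (x t - u) = (∑ i ∈ Icc 1 (t - 1), α i) • (x (t - 1) - x t) + α t • (w t - u) := by
  obtain ⟨s, rfl⟩ : ∃ s, t = s + 1 := ⟨t - 1, by grind⟩
  have hT : s + 1 ≤ T := (mem_Icc.1 ht).2
  have hnew := sum_Icc_smul_eq_of_anytime_average hα hx hT
  have hold := sum_Icc_smul_eq_of_anytime_average hα hx (Nat.le_of_succ_le hT)
  rw [sum_Icc_succ_top (Nat.le_add_left 1 s), sum_Icc_succ_top (Nat.le_add_left 1 s), ← hold]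
    at hnew
  rw [Nat.add_sub_cancel]
  linear_combination (norm := module) hnew

end AnytimeAverage

theorem stmt_6_general {d T : ℕ}
    (f : EuclideanSpace ℝ (Fin d) → ℝ)
    (hconv : ConvexOn ℝ Set.univ f) (hdiff : Differentiable ℝ f)
    (wstar : EuclideanSpace ℝ (Fin d))
    (α : ℕ → ℝ) (hα : ∀ t ∈ Icc 1 T, 0 < α t)
    (w x : ℕ → EuclideanSpace ℝ (Fin d))
    (hx : ∀ t ∈ Icc 1 T, x t = (∑ i ∈ Icc 1 t, α i)⁻¹ • ∑ i ∈ Icc 1 t, α i • w i)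
    (τ : ℕ → ℕ) :
    ∑ t ∈ Icc 1 T, α t * (f (x t) - f wstar) ≤
      (∑ t ∈ Icc 1 T, (∑ i ∈ Icc 1 (t - 1), α i) * ⟪gradient f (x t), x (t - 1) - x t⟫)
      + (∑ t ∈ Icc 1 T, α t * ⟪gradient f (x (t - τ t)), w t - wstar⟫)
      + ∑ t ∈ Icc 1 T, α t * (‖gradient f (x t) - gradient f (x (t - τ t))‖ * ‖w t - wstar‖) := by
  rw [← sum_add_distrib, ← sum_add_distrib]
  exact sum_le_sum fun t ht => hconv.mul_sub_le_of_smul_sub_eq (hdiff _) (hα t ht).le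
    (smul_sub_eq_of_anytime_average wstar hα hx ht)

/-- Decomposition of the weighted excess loss of the anytime averages
into the anytime-shift term, the (linearized, delayed) regret term, and the delay
discrepancy term. Here `α_{1:0} = 0` so the `t = 1` summand of the first sum vanishes. -/
theorem stmt_6 {d T : ℕ} (K : Set (EuclideanSpace ℝ (Fin d)))
    (hK : K.Nonempty) (hKconv : Convex ℝ K)
    (f : EuclideanSpace ℝ (Fin d) → ℝ)
    (hconv : ConvexOn ℝ Set.univ f) (hdiff : Differentiable ℝ f)
    (wstar : EuclideanSpace ℝ (Fin d)) (hws : wstar ∈ K)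
    (α : ℕ → ℝ) (hα : ∀ t ∈ Icc 1 T, 0 < α t)
    (w x : ℕ → EuclideanSpace ℝ (Fin d))
    (hw : ∀ t ∈ Icc 1 T, w t ∈ K)
    (hx : ∀ t ∈ Icc 1 T, x t = (∑ i ∈ Icc 1 t, α i)⁻¹ • ∑ i ∈ Icc 1 t, α i • w i)
    (τ : ℕ → ℕ) (hτ : ∀ t ∈ Icc 1 T, τ t ≤ t - 1) :
    ∑ t ∈ Icc 1 T, α t * (f (x t) - f wstar) ≤
      (∑ t ∈ Icc 1 T, (∑ i ∈ Icc 1 (t - 1), α i) * ⟪gradient f (x t), x (t - 1) - x t⟫)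
      + (∑ t ∈ Icc 1 T, α t * ⟪gradient f (x (t - τ t)), w t - wstar⟫)
      + ∑ t ∈ Icc 1 T, α t * (‖gradient f (x t) - gradient f (x (t - τ t))‖ * ‖w t - wstar‖) :=
  stmt_6_general f hconv hdiff wstar α hα w x hx τ
end

section
/- Let K ⊆ ℝ^d be a nonempty closed convex set of diameter at most D, let G̃ > 0, and let g_1,…,g_T ∈ ℝ^d satisfy ‖g_t‖ ≤ G̃ for all t. Starting from w_1 ∈ K, define w_{t+1} as the point of K closest to w_t − η_t·t·g_t, with step size η_t = D/(G̃·t^{3/2}). Then for every w* ∈ K, Σ_{t=1}^T t·⟨g_t, w_t − w*⟩ ≤ D·G̃·T^{3/2}. -/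
open Finset
open scoped RealInnerProductSpace

lemma proj_sq_le' {E : Type*} [NormedAddCommGroup E] [InnerProductSpace ℝ E]
    {K : Set E} (hconv : Convex ℝ K) {y v z : E} (hv : v ∈ K) (hz : z ∈ K)
    (hmin : ∀ u ∈ K, ‖v - y‖ ≤ ‖u - y‖) :
    ‖v - z‖ ^ 2 ≤ ‖y - z‖ ^ 2 := by
  haveI : Nonempty K := ⟨⟨v, hv⟩⟩
  have hbdd : BddBelow (Set.range fun u : K => ‖y - u‖) := by
    refine ⟨0, ?_⟩
    rintro _ ⟨u, rfl⟩
    exact norm_nonneg _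
  have hiInf : ‖y - v‖ = ⨅ u : K, ‖y - u‖ := by
    apply le_antisymm
    · exact le_ciInf fun u => by
        rw [norm_sub_rev y v, norm_sub_rev y u]; exact hmin u u.2
    · exact ciInf_le hbdd ⟨v, hv⟩
  have hobt := (norm_eq_iInf_iff_real_inner_le_zero hconv hv).mp hiInf z hz
  have hexp : ‖y - z‖ ^ 2 = ‖y - v‖ ^ 2 + 2 * ⟪y - v, v - z⟫ + ‖v - z‖ ^ 2 := by
    have h : y - z = (y - v) + (v - z) := by abel
    rw [h, norm_add_sq_real]
  have hneg : ⟪y - v, v - z⟫ = - ⟪y - v, z - v⟫ := by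
    rw [← inner_neg_right]; congr 1; abel
  nlinarith [sq_nonneg ‖y - v‖]

/-- Regret of projected Online Gradient Descent with linear weights
`α t = t`: with `‖g t‖ ≤ G̃`, steps `η t = D / (G̃ t^{3/2})` and Euclidean-projection
updates `w (t+1) = Π_K (w t - η t • (t • g t))`, the weighted regret against any
`w* ∈ K` is at most `D G̃ T^{3/2}`. -/
theorem stmt_12 {d T : ℕ} (K : Set (EuclideanSpace ℝ (Fin d)))
    (hK : K.Nonempty) (hKc : IsClosed K) (hKconv : Convex ℝ K) (D Gt : ℝ)
    (hD : ∀ u ∈ K, ∀ v ∈ K, ‖u - v‖ ≤ D) (hGt : 0 < Gt)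
    (g w : ℕ → EuclideanSpace ℝ (Fin d)) (η : ℕ → ℝ)
    (hg : ∀ t ∈ Icc 1 T, ‖g t‖ ≤ Gt)
    (hη : ∀ t ∈ Icc 1 T, η t = D / (Gt * (t : ℝ) ^ (3 / 2 : ℝ)))
    (hw1 : w 1 ∈ K)
    (hproj : ∀ t ∈ Icc 1 T, w (t + 1) ∈ K ∧
      ∀ z ∈ K, ‖w (t + 1) - (w t - (η t * t) • g t)‖ ≤ ‖z - (w t - (η t * t) • g t)‖) :
    ∀ wstar ∈ K,
      ∑ t ∈ Icc 1 T, (t : ℝ) * ⟪g t, w t - wstar⟫ ≤ D * Gt * (T : ℝ) ^ (3 / 2 : ℝ) := by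
  intro wstar hws
  obtain ⟨x0, hx0⟩ := hK
  have hD0 : 0 ≤ D := le_trans (norm_nonneg _) (hD x0 hx0 x0 hx0)
  -- membership of iterates
  have hmem : ∀ t : ℕ, 1 ≤ t → t ≤ T + 1 → w t ∈ K := by
    intro t h1 h2
    rcases Nat.exists_eq_add_of_le h1 with ⟨n, rfl⟩
    cases n with
    | zero => exact hw1
    | succ m =>
      have : (1 + m) ∈ Icc 1 T := mem_Icc.mpr ⟨by omega, by omega⟩
      have h := (hproj (1 + m) this).1
      have he : 1 + (m + 1) = (1 + m) + 1 := by omega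
      rw [he]
      exact h
  rcases eq_or_lt_of_le hD0 with hDeq | hDpos
  · -- degenerate case D = 0 : the set is a single point
    have hz : ∀ t ∈ Icc 1 T, (t : ℝ) * ⟪g t, w t - wstar⟫ = 0 := by
      intro t ht
      obtain ⟨h1, h2⟩ := mem_Icc.mp ht
      have hwt : w t ∈ K := hmem t h1 (by omega)
      have hle : ‖w t - wstar‖ ≤ 0 := hDeq ▸ hD _ hwt _ hws
      have h0 : w t - wstar = 0 := norm_le_zero_iff.mp hle
      rw [h0, inner_zero_right, mul_zero]
    rw [Finset.sum_congr rfl hz, Finset.sum_const_zero, ← hDeq, zero_mul, zero_mul]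
  -- main case D > 0
  set a : ℕ → ℝ := fun t => ‖w t - wstar‖ ^ 2 with ha
  set s : ℕ → ℝ := fun t => (t : ℝ) ^ ((1 : ℝ) / 2) with hsdef
  have hs_pos : ∀ t : ℕ, 1 ≤ t → 0 < s t := by
    intro t ht
    exact Real.rpow_pos_of_pos (by exact_mod_cast ht) _
  have hs_sq : ∀ t : ℕ, 1 ≤ t → s t * s t = (t : ℝ) := by
    intro t ht
    have htp : (0:ℝ) < t := by exact_mod_cast ht
    rw [hsdef, ← Real.rpow_add htp]
    norm_num
  have h32 : ∀ t : ℕ, 1 ≤ t → (t : ℝ) ^ (3 / 2 : ℝ) = (t : ℝ) * s t := by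
    intro t ht
    have htp : (0:ℝ) < t := by exact_mod_cast ht
    have : (3 / 2 : ℝ) = 1 + 1 / 2 := by norm_num
    rw [this, Real.rpow_add htp, Real.rpow_one, hsdef]
  -- per-step inequality
  have hstep : ∀ t ∈ Icc 1 T, (t : ℝ) * ⟪g t, w t - wstar⟫ ≤
      (a t - a (t + 1)) * (Gt * (t : ℝ) ^ (3 / 2 : ℝ) / (2 * D)) + D * Gt * s t / 2 := by
    intro t ht
    obtain ⟨ht1, htT⟩ := mem_Icc.mp ht
    have htp : (0:ℝ) < t := by exact_mod_cast ht1
    have hsp := hs_pos t ht1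
    have hs2 := hs_sq t ht1
    set c := η t * t with hcdef
    set X := ⟪g t, w t - wstar⟫ with hX
    have hc : c = D / (Gt * s t) := by
      rw [hcdef, hη t ht, h32 t ht1]
      field_simp
    have hcpos : 0 < c := by rw [hc]; positivity
    -- projection step
    have h1 : a (t + 1) ≤ ‖(w t - c • g t) - wstar‖ ^ 2 :=
      proj_sq_le' hKconv (hproj t ht).1 hws (fun u hu => (hproj t ht).2 u hu)
    -- expansion of the square
    have h2 : ‖(w t - c • g t) - wstar‖ ^ 2 = a t - 2 * c * X + c ^ 2 * ‖g t‖ ^ 2 := by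
      have h : (w t - c • g t) - wstar = (w t - wstar) - c • g t := by abel
      rw [h, norm_sub_sq_real, real_inner_smul_right, real_inner_comm, norm_smul,
        Real.norm_eq_abs, mul_pow, sq_abs, ha, hX]
      ring
    have hkey : 2 * c * X ≤ a t - a (t + 1) + c ^ 2 * ‖g t‖ ^ 2 := by
      rw [h2] at h1; linarith
    have hΓ : ‖g t‖ ≤ Gt := hg t ht
    have hΓ0 : (0:ℝ) ≤ ‖g t‖ := norm_nonneg _
    have hΓsq : ‖g t‖ ^ 2 ≤ Gt ^ 2 := by nlinarith
    -- divide by 2c and multiply by t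
    have e3 : (t : ℝ) / (2 * c) = Gt * (t : ℝ) * s t / (2 * D) := by
      rw [hc]; field_simp
    have e4 : (0:ℝ) < (t : ℝ) / (2 * c) := by positivity
    have e5 : (t : ℝ) / (2 * c) * c ^ 2 = D * s t / (2 * Gt) := by
      rw [hc, ← hs2]; field_simp
    calc (t : ℝ) * X = (t : ℝ) / (2 * c) * (2 * c * X) := by field_simp
      _ ≤ (t : ℝ) / (2 * c) * (a t - a (t + 1) + c ^ 2 * ‖g t‖ ^ 2) :=
          mul_le_mul_of_nonneg_left hkey e4.le
      _ = (a t - a (t + 1)) * ((t : ℝ) / (2 * c)) + (t : ℝ) / (2 * c) * c ^ 2 * ‖g t‖ ^ 2 := by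
          ring
      _ = (a t - a (t + 1)) * (Gt * (t : ℝ) * s t / (2 * D)) + D * s t / (2 * Gt) * ‖g t‖ ^ 2 := by
          rw [e5, e3]
      _ ≤ (a t - a (t + 1)) * (Gt * (t : ℝ) ^ (3 / 2 : ℝ) / (2 * D)) + D * Gt * s t / 2 := by
          rw [h32 t ht1]
          have : D * s t / (2 * Gt) * ‖g t‖ ^ 2 ≤ D * s t / (2 * Gt) * Gt ^ 2 :=
            mul_le_mul_of_nonneg_left hΓsq (by positivity)
          have heq : D * s t / (2 * Gt) * Gt ^ 2 = D * Gt * s t / 2 := by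
            field_simp
          rw [mul_assoc]
          linarith [this, heq ▸ this]
  -- diameter bound on iterates
  have haD : ∀ n : ℕ, 1 ≤ n → n ≤ T + 1 → a n ≤ D ^ 2 := by
    intro n h1 h2
    have := hD _ (hmem n h1 h2) _ hws
    have h0 : (0:ℝ) ≤ ‖w n - wstar‖ := norm_nonneg _
    show ‖w n - wstar‖ ^ 2 ≤ D ^ 2
    nlinarith
  -- monotonicity of b
  have hbmono : ∀ n : ℕ, Gt * (n : ℝ) ^ (3 / 2 : ℝ) / (2 * D) ≤
      Gt * ((n + 1 : ℕ) : ℝ) ^ (3 / 2 : ℝ) / (2 * D) := by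
    intro n
    have : ((n : ℝ)) ^ (3 / 2 : ℝ) ≤ (((n + 1 : ℕ)) : ℝ) ^ (3 / 2 : ℝ) := by
      apply Real.rpow_le_rpow (by positivity) (by push_cast; linarith) (by norm_num)
    have hpos : (0:ℝ) < Gt / (2 * D) := by positivity
    calc Gt * (n : ℝ) ^ (3 / 2 : ℝ) / (2 * D) = Gt / (2 * D) * (n : ℝ) ^ (3 / 2 : ℝ) := by ring
      _ ≤ Gt / (2 * D) * (((n + 1 : ℕ)) : ℝ) ^ (3 / 2 : ℝ) :=
          mul_le_mul_of_nonneg_left this hpos.le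
      _ = Gt * (((n + 1 : ℕ)) : ℝ) ^ (3 / 2 : ℝ) / (2 * D) := by ring
  -- main induction
  have hmain : ∀ n : ℕ, n ≤ T → ∑ t ∈ Icc 1 n, (t : ℝ) * ⟪g t, w t - wstar⟫ ≤
      (D ^ 2 - a (n + 1)) * (Gt * (n : ℝ) ^ (3 / 2 : ℝ) / (2 * D)) +
      ∑ t ∈ Icc 1 n, D * Gt * s t / 2 := by
    intro n
    induction n with
    | zero =>
      intro _
      simp [Real.zero_rpow (by norm_num : (3/2 : ℝ) ≠ 0)]
    | succ m ih =>
      intro hm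
      have hmT : m ≤ T := by omega
      have hms : (m + 1) ∈ Icc 1 T := mem_Icc.mpr ⟨by omega, hm⟩
      rw [Finset.sum_Icc_succ_top (by omega : 1 ≤ m + 1),
        Finset.sum_Icc_succ_top (by omega : 1 ≤ m + 1)]
      have hb := hbmono m
      have haDm : a (m + 1) ≤ D ^ 2 := haD (m + 1) (by omega) (by omega)
      have hbn : (0:ℝ) ≤ Gt * (m : ℝ) ^ (3 / 2 : ℝ) / (2 * D) := by positivity
      have key : (D ^ 2 - a (m + 1)) * (Gt * (m : ℝ) ^ (3 / 2 : ℝ) / (2 * D)) +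
          (a (m + 1) - a (m + 2)) * (Gt * ((m + 1 : ℕ) : ℝ) ^ (3 / 2 : ℝ) / (2 * D)) ≤
          (D ^ 2 - a (m + 2)) * (Gt * ((m + 1 : ℕ) : ℝ) ^ (3 / 2 : ℝ) / (2 * D)) := by
        nlinarith [mul_le_mul_of_nonneg_left hb (sub_nonneg.mpr haDm)]
      have hst := hstep (m + 1) hms
      have ihm := ih hmT
      push_cast at hst key ⊢
      linarith
  -- conclude
  have hfin := hmain T le_rfl
  have hsbd : ∑ t ∈ Icc 1 T, D * Gt * s t / 2 ≤ (T : ℝ) * (D * Gt * s T / 2) := by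
    rcases Nat.eq_zero_or_pos T with rfl | hT
    · simp
    · have : ∀ t ∈ Icc 1 T, D * Gt * s t / 2 ≤ D * Gt * s T / 2 := by
        intro t ht
        obtain ⟨h1, h2⟩ := mem_Icc.mp ht
        have : s t ≤ s T := by
          apply Real.rpow_le_rpow (by positivity) (by exact_mod_cast h2) (by norm_num)
        have hDG : (0:ℝ) ≤ D * Gt / 2 := by positivity
        nlinarith
      calc ∑ t ∈ Icc 1 T, D * Gt * s t / 2 ≤ ∑ _t ∈ Icc 1 T, D * Gt * s T / 2 :=
            Finset.sum_le_sum this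
        _ = (T : ℝ) * (D * Gt * s T / 2) := by
            rw [Finset.sum_const, Nat.card_Icc]
            simp [nsmul_eq_mul]
  have haT1 : (0:ℝ) ≤ a (T + 1) := sq_nonneg _
  have hbT : (0:ℝ) ≤ Gt * (T : ℝ) ^ (3 / 2 : ℝ) / (2 * D) := by positivity
  have hD2b : D ^ 2 * (Gt * (T : ℝ) ^ (3 / 2 : ℝ) / (2 * D)) =
      D * Gt * (T : ℝ) ^ (3 / 2 : ℝ) / 2 := by
    field_simp
  have hTsT : (T : ℝ) * s T = (T : ℝ) ^ (3 / 2 : ℝ) := by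
    rcases Nat.eq_zero_or_pos T with rfl | hT
    · simp [hsdef, Real.zero_rpow (by norm_num : (3/2 : ℝ) ≠ 0)]
    · rw [h32 T hT]
  have : (D ^ 2 - a (T + 1)) * (Gt * (T : ℝ) ^ (3 / 2 : ℝ) / (2 * D)) ≤
      D * Gt * (T : ℝ) ^ (3 / 2 : ℝ) / 2 := by
    nlinarith [mul_le_mul_of_nonneg_right (by linarith : D ^ 2 - a (T + 1) ≤ D ^ 2) hbT]
  have hlast : (T : ℝ) * (D * Gt * s T / 2) = D * Gt * (T : ℝ) ^ (3 / 2 : ℝ) / 2 := by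
    rw [← hTsT]; ring
  linarith [hfin, hsbd]
end

section
/- Let K ⊆ ℝ^d be a nonempty closed convex set, let f : ℝ^d → ℝ be differentiable and H-strongly convex with ‖∇f(x)‖ ≤ G for all x ∈ K, let G̃ ≥ G, fix weights α_t = t² and step sizes η̃_t = 8·α_t/(H·α_{1:t}), and let M_1, g_1, M_2, g_2, … ∈ ℝ^d satisfy ‖M_t‖ ≤ G̃ and ‖g_t‖ ≤ G̃ for all t. Starting from x_0 = y_0 ∈ K, define for t ≥ 1: x_t = the point of K closest to y_{t−1} − η̃_t·M_t, and y_t = the point of K closest to y_{t−1} − η̃_t·g_t. Then for every t ≥ 1 and every integer τ with 0 ≤ τ ≤ t − 1, ‖x_t − x_{t−τ}‖ ≤ 48·G̃·(τ + 2)/(H·t). -/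
open Finset
open scoped RealInnerProductSpace

private lemma sum_sq_lb (t : ℕ) : (t:ℝ)^3 ≤ 3 * ∑ i ∈ Icc 1 t, (i:ℝ)^2 := by
  induction t with
  | zero => simp
  | succ n ih =>
    rw [Finset.sum_Icc_succ_top (by omega)]
    push_cast
    nlinarith [ih, Nat.cast_nonneg (α := ℝ) n]

private lemma proj_close {d : ℕ} {K : Set (EuclideanSpace ℝ (Fin d))} (hKconv : Convex ℝ K)
    {p q w : EuclideanSpace ℝ (Fin d)} (hq : q ∈ K) (hw : w ∈ K)
    (hmin : ∀ z ∈ K, ‖q - p‖ ≤ ‖z - p‖) :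
    ‖q - w‖ ≤ ‖p - w‖ := by
  have : Nonempty K := ⟨⟨q, hq⟩⟩
  have hinf : ‖p - q‖ = ⨅ z : K, ‖p - z‖ := by
    apply le_antisymm
    · exact le_ciInf fun z => by rw [norm_sub_rev p q, norm_sub_rev p z]; exact hmin z z.2
    · exact ciInf_le ⟨0, fun b hb => by obtain ⟨z, rfl⟩ := hb; positivity⟩ (⟨q, hq⟩ : K)
  have hvi := (norm_eq_iInf_iff_real_inner_le_zero hKconv hq).1 hinf w hw
  have h1 : ‖w - q‖^2 = ⟪w - p, w - q⟫ + ⟪p - q, w - q⟫ := by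
    rw [← inner_add_left]
    have e : (w - p) + (p - q) = w - q := by abel
    rw [e, real_inner_self_eq_norm_sq]
  have h2 : ⟪w - p, w - q⟫ ≤ ‖w - p‖ * ‖w - q‖ := real_inner_le_norm _ _
  have h3 : ‖w - q‖^2 ≤ ‖w - p‖ * ‖w - q‖ := by linarith
  rw [norm_sub_rev q w, norm_sub_rev p w]
  rcases eq_or_lt_of_le (norm_nonneg (w - q)) with h | h
  · rw [← h]; positivity
  · nlinarith

/-- Stability of the iterates of optimistic strongly-convex OGD:
with weights `α t = t²`, steps `η̃ t = 8 α t / (H α_{1:t})`, hints and feedback of norm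
at most `G̃ ≥ G`, projected updates starting from `x 0 = y 0 ∈ K`, one has
`‖x t - x (t - τ)‖ ≤ 48 G̃ (τ + 2) / (H t)` for all `t ≥ 1` and `0 ≤ τ ≤ t - 1`. -/
theorem stmt_17 {d : ℕ} (K : Set (EuclideanSpace ℝ (Fin d)))
    (hK : K.Nonempty) (hKc : IsClosed K) (hKconv : Convex ℝ K)
    (H G Gt : ℝ) (hH : 0 < H) (hGGt : G ≤ Gt)
    (f : EuclideanSpace ℝ (Fin d) → ℝ) (hdiff : Differentiable ℝ f)
    (hsc : ∀ a b : EuclideanSpace ℝ (Fin d),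
      f a - f b ≤ ⟪gradient f a, a - b⟫ - H / 2 * ‖a - b‖ ^ 2)
    (hG : ∀ z ∈ K, ‖gradient f z‖ ≤ G)
    (η : ℕ → ℝ)
    (hη : ∀ t : ℕ, 1 ≤ t → η t = 8 * (t : ℝ) ^ 2 / (H * ∑ i ∈ Icc 1 t, (i : ℝ) ^ 2))
    (M g : ℕ → EuclideanSpace ℝ (Fin d))
    (hM : ∀ t : ℕ, 1 ≤ t → ‖M t‖ ≤ Gt) (hg : ∀ t : ℕ, 1 ≤ t → ‖g t‖ ≤ Gt)
    (x y : ℕ → EuclideanSpace ℝ (Fin d)) (h0 : x 0 = y 0) (h0K : x 0 ∈ K)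
    (hx : ∀ t : ℕ, 1 ≤ t → x t ∈ K ∧ ∀ z ∈ K,
      ‖x t - (y (t - 1) - η t • M t)‖ ≤ ‖z - (y (t - 1) - η t • M t)‖)
    (hy : ∀ t : ℕ, 1 ≤ t → y t ∈ K ∧ ∀ z ∈ K,
      ‖y t - (y (t - 1) - η t • g t)‖ ≤ ‖z - (y (t - 1) - η t • g t)‖) :
    ∀ t : ℕ, 1 ≤ t → ∀ τ : ℕ, τ ≤ t - 1 →
      ‖x t - x (t - τ)‖ ≤ 48 * Gt * (τ + 2) / (H * t) := by
  -- basic positivity facts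
  obtain ⟨z0, hz0⟩ := hK
  have hG0 : 0 ≤ G := le_trans (norm_nonneg _) (hG z0 hz0)
  have hGt0 : 0 ≤ Gt := le_trans hG0 hGGt
  -- every y i is in K
  have yK : ∀ i : ℕ, y i ∈ K := by
    intro i
    cases i with
    | zero => exact h0 ▸ h0K
    | succ n => exact (hy (n+1) (by omega)).1
  -- properties of the step sizes
  have ηprop : ∀ i : ℕ, 1 ≤ i → 0 ≤ η i ∧ η i ≤ 24 / (H * i) := by
    intro i hi
    have hi1 : (1:ℝ) ≤ (i:ℝ) := by exact_mod_cast hi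
    have hsq : (1:ℝ) ≤ (i:ℝ)^2 := by nlinarith
    have hcube : (1:ℝ) ≤ (i:ℝ)^3 := by nlinarith
    have hS : 0 < ∑ j ∈ Icc 1 i, (j:ℝ)^2 := by nlinarith [sum_sq_lb i]
    rw [hη i hi]
    refine ⟨by positivity, ?_⟩
    rw [div_le_div_iff₀ (by positivity) (by positivity)]
    have key := mul_le_mul_of_nonneg_left (sum_sq_lb i) hH.le
    linarith [key]
  -- per-step movement of y
  have step_y : ∀ i : ℕ, 1 ≤ i → ‖y i - y (i-1)‖ ≤ η i * Gt := by
    intro i hi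
    have h := proj_close hKconv (hy i hi).1 (yK (i-1)) (hy i hi).2
    have e : ‖(y (i-1) - η i • g i) - y (i-1)‖ = η i * ‖g i‖ := by
      have : (y (i-1) - η i • g i) - y (i-1) = -(η i • g i) := by abel
      rw [this, norm_neg, norm_smul, Real.norm_eq_abs, abs_of_nonneg (ηprop i hi).1]
    calc ‖y i - y (i-1)‖ ≤ ‖(y (i-1) - η i • g i) - y (i-1)‖ := h
      _ = η i * ‖g i‖ := e
      _ ≤ η i * Gt := mul_le_mul_of_nonneg_left (hg i hi) (ηprop i hi).1
  -- movement of x t away from y (t-1)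
  have step_x : ∀ i : ℕ, 1 ≤ i → ‖x i - y (i-1)‖ ≤ η i * Gt := by
    intro i hi
    have h := proj_close hKconv (hx i hi).1 (yK (i-1)) (hx i hi).2
    have e : ‖(y (i-1) - η i • M i) - y (i-1)‖ = η i * ‖M i‖ := by
      have : (y (i-1) - η i • M i) - y (i-1) = -(η i • M i) := by abel
      rw [this, norm_neg, norm_smul, Real.norm_eq_abs, abs_of_nonneg (ηprop i hi).1]
    calc ‖x i - y (i-1)‖ ≤ ‖(y (i-1) - η i • M i) - y (i-1)‖ := h
      _ = η i * ‖M i‖ := e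
      _ ≤ η i * Gt := mul_le_mul_of_nonneg_left (hM i hi) (ηprop i hi).1
  -- chaining the y-movements
  have chain : ∀ a b : ℕ, a ≤ b → ‖y b - y a‖ ≤ (∑ i ∈ Icc (a+1) b, η i) * Gt := by
    intro a b hab
    induction b, hab using Nat.le_induction with
    | base => simp
    | succ b hab ih =>
      rw [Finset.sum_Icc_succ_top (by omega)]
      have h1 : ‖y (b+1) - y a‖ ≤ ‖y (b+1) - y b‖ + ‖y b - y a‖ := norm_sub_le_norm_sub_add_norm_sub _ _ _
      have h2 : ‖y (b+1) - y b‖ ≤ η (b+1) * Gt := by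
        have := step_y (b+1) (by omega)
        simpa using this
      calc ‖y (b+1) - y a‖ ≤ ‖y (b+1) - y b‖ + ‖y b - y a‖ := h1
        _ ≤ η (b+1) * Gt + (∑ i ∈ Icc (a+1) b, η i) * Gt := add_le_add h2 ih
        _ = (∑ i ∈ Icc (a+1) b, η i + η (b+1)) * Gt := by ring
  -- diameter bound on K
  have diam : ∀ a ∈ K, ∀ b ∈ K, H * ‖a - b‖ ≤ 2 * G := by
    intro a ha b hb
    have h1 := hsc a b
    have h2 := hsc b a
    have e1 : (b - a) = -(a - b) := by abel
    have e2 : ⟪gradient f b, b - a⟫ = -⟪gradient f b, a - b⟫ := by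
      rw [e1, inner_neg_right]
    rw [e2, norm_sub_rev b a] at h2
    have hin : ⟪gradient f a, a-b⟫ - ⟪gradient f b, a-b⟫ ≤ ‖gradient f a - gradient f b‖ * ‖a-b‖ := by
      rw [← inner_sub_left]; exact real_inner_le_norm _ _
    have hnrm : ‖gradient f a - gradient f b‖ ≤ 2*G :=
      (norm_sub_le _ _).trans (by linarith [hG a ha, hG b hb])
    have key : H * ‖a-b‖^2 ≤ 2*G*‖a-b‖ := by
      nlinarith [norm_nonneg (a-b)]
    rcases eq_or_lt_of_le (norm_nonneg (a-b)) with h | h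
    · rw [← h]; nlinarith
    · nlinarith
  -- main argument
  intro t ht τ hτ
  set s := t - τ with hs
  have hs1 : 1 ≤ s := by omega
  have hst : s ≤ t := by omega
  have hcast : (s:ℝ) = (t:ℝ) - (τ:ℝ) := by
    rw [hs, Nat.cast_sub (by omega)]
  have ht1 : (1:ℝ) ≤ (t:ℝ) := by exact_mod_cast ht
  have hτt : (τ:ℝ) ≤ (t:ℝ) - 1 := by
    have : τ ≤ t - 1 := hτ
    have : (τ:ℝ) ≤ ((t-1 : ℕ):ℝ) := by exact_mod_cast this
    rwa [Nat.cast_sub ht, Nat.cast_one] at this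
  have hspos : (0:ℝ) < (s:ℝ) := by rw [hcast]; linarith
  -- bound each step size on the window
  have hηs : ∀ i ∈ Icc s t, η i ≤ 24 / (H * s) := by
    intro i hi
    rw [Finset.mem_Icc] at hi
    have h1 := (ηprop i (by omega)).2
    have hi1 : (s:ℝ) ≤ (i:ℝ) := by exact_mod_cast hi.1
    calc η i ≤ 24 / (H * i) := h1
      _ ≤ 24 / (H * s) := by gcongr <;> positivity
  have hsum : ∑ i ∈ Icc s t, η i ≤ ((τ:ℝ)+1) * (24/(H * s)) := by
    have hb := Finset.sum_le_card_nsmul (Icc s t) η (24/(H*(s:ℝ))) hηs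
    rw [Nat.card_Icc, nsmul_eq_mul] at hb
    have e : t + 1 - s = τ + 1 := by omega
    rw [e] at hb
    calc ∑ i ∈ Icc s t, η i ≤ ((τ+1 : ℕ):ℝ) * (24/(H*(s:ℝ))) := hb
      _ = ((τ:ℝ)+1) * (24/(H * s)) := by push_cast; ring
  -- triangle inequality chain
  have hxbound : ‖x t - x s‖ ≤ (∑ i ∈ Icc s t, η i + η s) * Gt := by
    have A : ‖x t - y (t-1)‖ ≤ η t * Gt := step_x t ht
    have C : ‖x s - y (s-1)‖ ≤ η s * Gt := step_x s hs1
    have B : ‖y (t-1) - y (s-1)‖ ≤ (∑ i ∈ Icc s (t-1), η i) * Gt := by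
      have := chain (s-1) (t-1) (by omega)
      have e : s - 1 + 1 = s := by omega
      rwa [e] at this
    have tri : ‖x t - x s‖ ≤ ‖x t - y (t-1)‖ + ‖y (t-1) - y (s-1)‖ + ‖y (s-1) - x s‖ := by
      have t1 : ‖x t - x s‖ ≤ ‖x t - y (s-1)‖ + ‖y (s-1) - x s‖ :=
        norm_sub_le_norm_sub_add_norm_sub _ _ _
      have t2 : ‖x t - y (s-1)‖ ≤ ‖x t - y (t-1)‖ + ‖y (t-1) - y (s-1)‖ :=
        norm_sub_le_norm_sub_add_norm_sub _ _ _
      linarith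
    have esum : ∑ i ∈ Icc s t, η i = ∑ i ∈ Icc s (t-1), η i + η t := by
      have e : t = (t-1) + 1 := by omega
      rw [e, Finset.sum_Icc_succ_top (by omega)]
      congr 1 <;> omega
    have C' : ‖y (s-1) - x s‖ ≤ η s * Gt := by rwa [norm_sub_rev] at C
    calc ‖x t - x s‖ ≤ ‖x t - y (t-1)‖ + ‖y (t-1) - y (s-1)‖ + ‖y (s-1) - x s‖ := tri
      _ ≤ η t * Gt + (∑ i ∈ Icc s (t-1), η i) * Gt + η s * Gt := by linarith
      _ = (∑ i ∈ Icc s t, η i + η s) * Gt := by rw [esum]; ring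
  have hηsb : η s ≤ 24 / (H * s) := hηs s (by rw [Finset.mem_Icc]; omega)
  rcases le_or_gt (2*(τ:ℝ)) (t:ℝ) with hcase | hcase
  · -- small τ: use the step-size bound
    have h1 : ‖x t - x s‖ ≤ ((τ:ℝ)+2) * (24/(H * s)) * Gt := by
      calc ‖x t - x s‖ ≤ (∑ i ∈ Icc s t, η i + η s) * Gt := hxbound
        _ ≤ (((τ:ℝ)+1) * (24/(H * s)) + 24/(H * s)) * Gt := by
            apply mul_le_mul_of_nonneg_right _ hGt0
            linarith
        _ = ((τ:ℝ)+2) * (24/(H * s)) * Gt := by ring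
    refine h1.trans ?_
    rw [show ((τ:ℝ)+2) * (24/(H*(s:ℝ))) * Gt = 24*((τ:ℝ)+2)*Gt/(H*(s:ℝ)) from by ring]
    rw [div_le_div_iff₀ (by positivity) (by positivity), hcast]
    have hτ0 : (0:ℝ) ≤ (τ:ℝ) := Nat.cast_nonneg τ
    have key : 0 ≤ Gt*H*((τ:ℝ)+2)*((t:ℝ)-2*(τ:ℝ)) := by
      apply mul_nonneg
      · apply mul_nonneg (mul_nonneg hGt0 hH.le); linarith
      · linarith
    linarith [key]
  · -- large τ: use the diameter bound
    have hd := diam (x t) (hx t ht).1 (x s) (hx s hs1).1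
    have : ‖x t - x s‖ ≤ 2*G/H := by
      rw [le_div_iff₀ hH]; linarith [hd]
    refine this.trans ?_
    rw [div_le_div_iff₀ hH (by positivity)]
    have hτ0 : (0:ℝ) ≤ (τ:ℝ) := Nat.cast_nonneg τ
    have k1 : G * (H*(t:ℝ)) ≤ Gt * (H*(t:ℝ)) :=
      mul_le_mul_of_nonneg_right hGGt (by positivity)
    have k2 : Gt*H*(t:ℝ) ≤ Gt*H*(2*(τ:ℝ)) :=
      mul_le_mul_of_nonneg_left hcase.le (mul_nonneg hGt0 hH.le)
    linarith [k1, k2, mul_nonneg (mul_nonneg hGt0 hH.le) hτ0, mul_nonneg hGt0 hH.le]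
end

section
/- Let K ⊆ ℝ^d be a nonempty convex set, let f : ℝ^d → ℝ be differentiable, H-strongly convex, and L-smooth, let w* be a minimizer of f over K, fix weights α_t = t², let τ_1,…,τ_T be integers with 0 ≤ τ_t ≤ t − 1 and mean μ_τ and variance σ_τ², let G̃ > 0, and let x_1,…,x_T ∈ K satisfy ‖x_t − x_{t−τ_t}‖ ≤ 48·G̃·(τ_t + 2)/(H·t) for all t (with x_0 := x_1 if needed for t = 1, τ_1 = 0). Then Σ_{t=1}^T α_t·⟨∇f(x_t) − ∇f(x_{t−τ_t}), x_t − w*⟩ ≤ Σ_{t=1}^T (α_t/4)·(f(x_t) − f(w*)) + 4608·L²·G̃²·T·(σ_τ² + μ_τ² + 4·μ_τ + 4)/H³. -/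
open Finset
open scoped RealInnerProductSpace

/-!
Each summand is bounded separately. Cauchy–Schwarz and smoothness give
`⟪∇f(x_t) - ∇f(x_{t-τ_t}), x_t - w*⟫ ≤ L ‖x_t - x_{t-τ_t}‖ ‖x_t - w*‖`, and AM-GM splits this into
`(H/8) ‖x_t - w*‖² + (2L²/H) ‖x_t - x_{t-τ_t}‖²`. First-order optimality of `w*` on the convex set
`K` together with strong convexity gives `(H/2) ‖x_t - w*‖² ≤ f(x_t) - f(w*)`, which absorbs the
first part; the stability bound turns `t² ‖x_t - x_{t-τ_t}‖²` into `O((τ_t + 2)²/H²)`, and summing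
`(τ_t + 2)²` over `t` is `T (σ_τ² + μ_τ² + 4μ_τ + 4)`.
-/

section StronglyConvex

variable {E : Type*} [NormedAddCommGroup E] [InnerProductSpace ℝ E] [CompleteSpace E]
  {f : E → ℝ} {H L : ℝ}

theorem inner_gradient_sub_nonneg_of_isMinOn {K : Set E} (hK : Convex ℝ K) {w z : E}
    (hf : DifferentiableAt ℝ f w) (hmin : IsMinOn f K w) (hw : w ∈ K) (hz : z ∈ K) :
    0 ≤ ⟪gradient f w, z - w⟫ := by
  have hcone := sub_mem_posTangentConeAt_of_segment_subset (hK.segment_subset hw hz)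
  simpa using hmin.localize.hasFDerivWithinAt_nonneg
    hf.hasGradientAt.hasFDerivAt.hasFDerivWithinAt hcone

theorem half_mul_sq_norm_sub_le_of_isMinOn {K : Set E} (hK : Convex ℝ K) {w z : E}
    (hsc : f w - f z ≤ ⟪gradient f w, w - z⟫ - H / 2 * ‖w - z‖ ^ 2)
    (hf : DifferentiableAt ℝ f w) (hmin : IsMinOn f K w) (hw : w ∈ K) (hz : z ∈ K) :
    H / 2 * ‖z - w‖ ^ 2 ≤ f z - f w := by
  have hopt := inner_gradient_sub_nonneg_of_isMinOn hK hf hmin hw hz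
  rw [← neg_sub z w, inner_neg_right, norm_neg] at hsc
  linarith

theorem inner_gradient_sub_gradient_le {x y w : E} (hH : 0 < H)
    (hL : ‖gradient f x - gradient f y‖ ≤ L * ‖x - y‖)
    (hgrowth : H / 2 * ‖x - w‖ ^ 2 ≤ f x - f w) :
    ⟪gradient f x - gradient f y, x - w⟫ ≤ (f x - f w) / 4 + 2 * L ^ 2 * ‖x - y‖ ^ 2 / H := by
  set a := ‖x - y‖
  set b := ‖x - w‖
  have hinner : ⟪gradient f x - gradient f y, x - w⟫ ≤ L * a * b :=
    (real_inner_le_norm _ _).trans (mul_le_mul_of_nonneg_right hL (norm_nonneg _))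
  -- `L a b ≤ H b² / 8 + 2 L² a² / H` is `(H b - 4 L a)² ≥ 0` divided by `8 H`.
  have hamgm : L * a * b ≤ H / 8 * b ^ 2 + 2 * L ^ 2 * a ^ 2 / H := by
    rw [← sub_nonneg]
    have : H / 8 * b ^ 2 + 2 * L ^ 2 * a ^ 2 / H - L * a * b =
        (H * b - 4 * L * a) ^ 2 / (8 * H) := by
      field_simp
      ring
    rw [this]
    positivity
  linarith

theorem sq_mul_inner_gradient_sub_gradient_le {x y w : E} {t c : ℝ} (hH : 0 < H) (ht : 0 < t)
    (hL : ‖gradient f x - gradient f y‖ ≤ L * ‖x - y‖)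
    (hgrowth : H / 2 * ‖x - w‖ ^ 2 ≤ f x - f w) (hxy : ‖x - y‖ ≤ c / (H * t)) :
    t ^ 2 * ⟪gradient f x - gradient f y, x - w⟫ ≤
      t ^ 2 / 4 * (f x - f w) + 2 * L ^ 2 * c ^ 2 / H ^ 3 := by
  have hstep := mul_le_mul_of_nonneg_left (inner_gradient_sub_gradient_le hH hL hgrowth)
    (sq_nonneg t)
  have hscaled : t * ‖x - y‖ ≤ c / H := by
    rw [le_div_iff₀ (by positivity)] at hxy
    rw [le_div_iff₀ hH]
    linarith [show t * ‖x - y‖ * H = ‖x - y‖ * (H * t) by ring]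
  have hsq : (t * ‖x - y‖) ^ 2 ≤ (c / H) ^ 2 :=
    pow_le_pow_left₀ (by positivity) hscaled 2
  calc t ^ 2 * ⟪gradient f x - gradient f y, x - w⟫
      ≤ t ^ 2 / 4 * (f x - f w) + 2 * L ^ 2 / H * (t * ‖x - y‖) ^ 2 :=
        hstep.trans_eq (by ring)
    _ ≤ t ^ 2 / 4 * (f x - f w) + 2 * L ^ 2 / H * (c / H) ^ 2 := by gcongr
    _ = t ^ 2 / 4 * (f x - f w) + 2 * L ^ 2 * c ^ 2 / H ^ 3 := by
        field_simp

end StronglyConvex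

theorem sum_add_two_sq_eq_card_mul {ι : Type*} (s : Finset ι) (u : ι → ℝ) (μ σ2 : ℝ)
    (hμ : μ = (∑ i ∈ s, u i) / #s) (hσ : σ2 = (∑ i ∈ s, u i ^ 2) / #s - μ ^ 2) :
    ∑ i ∈ s, (u i + 2) ^ 2 = #s * (σ2 + μ ^ 2 + 4 * μ + 4) := by
  rcases s.eq_empty_or_nonempty with rfl | hs
  · simp
  have hcard : (#s : ℝ) ≠ 0 := by exact_mod_cast hs.card_pos.ne'
  have hexpand : ∑ i ∈ s, (u i + 2) ^ 2 = ∑ i ∈ s, u i ^ 2 + 4 * ∑ i ∈ s, u i + 4 * #s := by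
    simp only [add_sq, sum_add_distrib, mul_sum, sum_const, nsmul_eq_mul]
    ring_nf
  rw [hexpand, hσ, hμ]
  field_simp
  ring

theorem stmt_18_general {d T : ℕ} (K : Set (EuclideanSpace ℝ (Fin d)))
    (hKconv : Convex ℝ K)
    (H L Gt : ℝ) (hH : 0 < H)
    (f : EuclideanSpace ℝ (Fin d) → ℝ) (hdiff : Differentiable ℝ f)
    (hsc : ∀ a b : EuclideanSpace ℝ (Fin d),
      f a - f b ≤ ⟪gradient f a, a - b⟫ - H / 2 * ‖a - b‖ ^ 2)
    (hL : ∀ a b : EuclideanSpace ℝ (Fin d), ‖gradient f a - gradient f b‖ ≤ L * ‖a - b‖)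
    (wstar : EuclideanSpace ℝ (Fin d)) (hws : wstar ∈ K) (hmin : ∀ z ∈ K, f wstar ≤ f z)
    (τ : ℕ → ℕ)
    (μτ στ2 : ℝ)
    (hμτ : μτ = (∑ t ∈ Icc 1 T, (τ t : ℝ)) / T)
    (hστ : στ2 = (∑ t ∈ Icc 1 T, (τ t : ℝ) ^ 2) / T - μτ ^ 2)
    (x : ℕ → EuclideanSpace ℝ (Fin d))
    (hxK : ∀ t ∈ Icc 1 T, x t ∈ K)
    (hxb : ∀ t ∈ Icc 1 T, ‖x t - x (t - τ t)‖ ≤ 48 * Gt * (τ t + 2) / (H * t)) :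
    ∑ t ∈ Icc 1 T, (t : ℝ) ^ 2 * ⟪gradient f (x t) - gradient f (x (t - τ t)), x t - wstar⟫ ≤
      (∑ t ∈ Icc 1 T, (t : ℝ) ^ 2 / 4 * (f (x t) - f wstar))
      + 4608 * L ^ 2 * Gt ^ 2 * T * (στ2 + μτ ^ 2 + 4 * μτ + 4) / H ^ 3 := by
  have hcard : (#(Icc 1 T) : ℝ) = T := by simp
  have hsum := sum_add_two_sq_eq_card_mul (Icc 1 T) (fun t ↦ (τ t : ℝ)) μτ στ2
    (by rw [hcard, hμτ]) (by rw [hcard, hστ])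
  rw [hcard] at hsum
  calc ∑ t ∈ Icc 1 T, (t : ℝ) ^ 2 * ⟪gradient f (x t) - gradient f (x (t - τ t)), x t - wstar⟫
      ≤ ∑ t ∈ Icc 1 T, ((t : ℝ) ^ 2 / 4 * (f (x t) - f wstar)
          + 2 * L ^ 2 * (48 * Gt * (τ t + 2)) ^ 2 / H ^ 3) := by
        refine sum_le_sum fun t ht ↦ sq_mul_inner_gradient_sub_gradient_le hH
          (by exact_mod_cast (mem_Icc.mp ht).1) (hL _ _) ?_ (hxb t ht)
        exact half_mul_sq_norm_sub_le_of_isMinOn hKconv (hsc _ _) (hdiff wstar) hmin hws (hxK t ht)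
    _ = (∑ t ∈ Icc 1 T, (t : ℝ) ^ 2 / 4 * (f (x t) - f wstar))
          + 4608 * L ^ 2 * Gt ^ 2 * T * (στ2 + μτ ^ 2 + 4 * μτ + 4) / H ^ 3 := by
        have hdelay : ∑ t ∈ Icc 1 T, 2 * L ^ 2 * (48 * Gt * (τ t + 2)) ^ 2 / H ^ 3
            = 4608 * L ^ 2 * Gt ^ 2 / H ^ 3 * ∑ t ∈ Icc 1 T, ((τ t : ℝ) + 2) ^ 2 := by
          rw [mul_sum]
          exact sum_congr rfl fun t _ ↦ by ring
        rw [sum_add_distrib, hdelay, hsum]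
        ring

/-- Bound on the delay term (D) in the strongly convex analysis:
for an `H`-strongly convex, `L`-smooth `f` minimized at `w* ∈ K`, weights `α t = t²`,
delays `0 ≤ τ t ≤ t - 1` with mean `μ_τ` and variance `σ_τ²`, and points `x t ∈ K`
satisfying the stability bound `‖x t - x (t - τ t)‖ ≤ 48 G̃ (τ t + 2)/(H t)`, the sum
`∑ α t ⟪∇f(x t) - ∇f(x (t - τ t)), x t - w*⟫` is at most
`∑ (α t / 4) (f (x t) - f w*) + 4608 L² G̃² T (σ_τ² + μ_τ² + 4 μ_τ + 4) / H³`. -/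
theorem stmt_18 {d T : ℕ} (K : Set (EuclideanSpace ℝ (Fin d)))
    (hK : K.Nonempty) (hKconv : Convex ℝ K)
    (H L Gt : ℝ) (hH : 0 < H) (hL0 : 0 ≤ L) (hGt : 0 < Gt)
    (f : EuclideanSpace ℝ (Fin d) → ℝ) (hdiff : Differentiable ℝ f)
    (hsc : ∀ a b : EuclideanSpace ℝ (Fin d),
      f a - f b ≤ ⟪gradient f a, a - b⟫ - H / 2 * ‖a - b‖ ^ 2)
    (hL : ∀ a b : EuclideanSpace ℝ (Fin d), ‖gradient f a - gradient f b‖ ≤ L * ‖a - b‖)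
    (wstar : EuclideanSpace ℝ (Fin d)) (hws : wstar ∈ K) (hmin : ∀ z ∈ K, f wstar ≤ f z)
    (τ : ℕ → ℕ) (hτ : ∀ t ∈ Icc 1 T, τ t ≤ t - 1)
    (μτ στ2 : ℝ)
    (hμτ : μτ = (∑ t ∈ Icc 1 T, (τ t : ℝ)) / T)
    (hστ : στ2 = (∑ t ∈ Icc 1 T, (τ t : ℝ) ^ 2) / T - μτ ^ 2)
    (x : ℕ → EuclideanSpace ℝ (Fin d))
    (hxK : ∀ t ∈ Icc 1 T, x t ∈ K)
    (hxb : ∀ t ∈ Icc 1 T, ‖x t - x (t - τ t)‖ ≤ 48 * Gt * (τ t + 2) / (H * t)) :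
    ∑ t ∈ Icc 1 T, (t : ℝ) ^ 2 * ⟪gradient f (x t) - gradient f (x (t - τ t)), x t - wstar⟫ ≤
      (∑ t ∈ Icc 1 T, (t : ℝ) ^ 2 / 4 * (f (x t) - f wstar))
      + 4608 * L ^ 2 * Gt ^ 2 * T * (στ2 + μτ ^ 2 + 4 * μτ + 4) / H ^ 3 :=
  stmt_18_general K hKconv H L Gt hH f hdiff hsc hL wstar hws hmin τ μτ στ2 hμτ hστ x hxK hxb
end
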